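/- Let ε be a real random variable with E ε = 0, E ε⁴ = v < ∞, and let b be a real constant with |b| ≤ τ/2 for some τ > 0. Set u = b + ε and ξ = ψ_τ(u) where ψ_τ(x) = sign(x)·min(|x|, τ). Then |E ξ − b| ≤ min(2σ²/τ, 8v/τ³), where σ² = E ε². -/

import Mathlib

open MeasureTheory

/-- Truncation operator ψ_τ(u) = sign(u)·min(|u|, τ). -/
noncomputable def psi (τ u : ℝ) : ℝ := Real.sign u * min |u| τ

/-!
Truncation only moves a point `u` when `|u| > τ`, and then by `|u| - τ`. With `u = b + ε` and
`|b| ≤ τ / 2`, this is at most `(|ε| - τ / 2)⁺ ≤ |ε| ^ q / (τ / 2) ^ (q - 1)`. Since `E ε = 0`,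
`E ψ_τ(u) - b = E (ψ_τ(u) - u)`, so integrating the pointwise bound with `q = 2` and `q = 4`
gives the two estimates.
-/

section Truncation

variable {τ : ℝ}

theorem psi_eq_max_min (hτ : 0 ≤ τ) (u : ℝ) : psi τ u = max (-τ) (min u τ) := by
  rcases lt_trichotomy u 0 with h | rfl | h
  · rw [psi, Real.sign_of_neg h, abs_of_neg h, min_eq_left (h.le.trans hτ),
      neg_one_mul, ← max_neg_neg, neg_neg, max_comm]
  · simp [psi, hτ]
  · rw [psi, Real.sign_of_pos h, abs_of_pos h, one_mul,
      max_eq_right (le_min (by linarith) (by linarith))]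

theorem continuous_psi (hτ : 0 ≤ τ) : Continuous (psi τ) := by
  simp only [funext (psi_eq_max_min hτ)]
  fun_prop

theorem abs_psi_le (hτ : 0 ≤ τ) (u : ℝ) : |psi τ u| ≤ τ := by
  rw [psi_eq_max_min hτ, _root_.abs_le]
  exact ⟨le_max_left _ _, max_le (by linarith) (min_le_right _ _)⟩

theorem abs_psi_sub_self_le (hτ : 0 ≤ τ) (u : ℝ) : |psi τ u - u| ≤ max 0 (|u| - τ) := by
  rw [psi_eq_max_min hτ]
  rcases le_total u (-τ) with h | h
  · rw [min_eq_left (by linarith), max_eq_left h, abs_of_nonneg (by linarith),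
      abs_of_nonpos (by linarith)]
    exact le_max_of_le_right (by linarith)
  rcases le_total u τ with h' | h'
  · rw [min_eq_left h', max_eq_right h, sub_self, abs_zero]
    exact le_max_left _ _
  · rw [min_eq_right h', max_eq_right (by linarith), abs_of_nonpos (by linarith),
      abs_of_nonneg (by linarith)]
    exact le_max_of_le_right (by linarith)

theorem abs_psi_add_sub_add_le {b c : ℝ} (hτ : 0 ≤ τ) (hcb : c ≤ τ - |b|) (e : ℝ) :
    |psi τ (b + e) - (b + e)| ≤ max 0 (|e| - c) :=
  (abs_psi_sub_self_le hτ _).trans <|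
    max_le_max le_rfl (by linarith [abs_add_le b e])

end Truncation

theorem max_zero_sub_le_pow_div_pow {x c : ℝ} (hx : 0 ≤ x) (hc : 0 < c) (n : ℕ) :
    max 0 (x - c) ≤ x ^ (n + 1) / c ^ n := by
  rcases le_total x c with h | h
  · rw [max_eq_left (by linarith)]
    positivity
  · have hxc : 1 ≤ (x / c) ^ n := one_le_pow₀ ((one_le_div hc).2 h)
    calc max 0 (x - c) ≤ x := max_le hx (by linarith)
      _ ≤ x * (x / c) ^ n := le_mul_of_one_le_right hx hxc
      _ = x ^ (n + 1) / c ^ n := by rw [div_pow, pow_succ']; ring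

section Bias

variable {Ω : Type*} [MeasurableSpace Ω] {μ : Measure Ω} [IsProbabilityMeasure μ] {ε : Ω → ℝ}

theorem integral_psi_add_sub_eq (hε : Integrable ε μ) (hzero : ∫ ω, ε ω ∂μ = 0)
    {τ : ℝ} (hτ : 0 ≤ τ) (b : ℝ) :
    (∫ ω, psi τ (b + ε ω) ∂μ) - b = ∫ ω, (psi τ (b + ε ω) - (b + ε ω)) ∂μ := by
  have hψ : Integrable (fun ω => psi τ (b + ε ω)) μ :=
    .of_bound ((continuous_psi hτ).comp_aestronglyMeasurable
      (hε.aestronglyMeasurable.const_add b)) τ (.of_forall fun ω => abs_psi_le hτ _)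
  rw [integral_sub (g := fun ω => b + ε ω) hψ ((integrable_const b).add hε),
    integral_add (integrable_const b) hε, hzero, integral_const, probReal_univ, one_smul, add_zero]

theorem abs_integral_psi_add_sub_le (hε : Integrable ε μ) (hzero : ∫ ω, ε ω ∂μ = 0)
    {τ b c : ℝ} (hτ : 0 ≤ τ) (hc : 0 < c) (hcb : c ≤ τ - |b|) (n : ℕ)
    (hmom : Integrable (fun ω => |ε ω| ^ (n + 1)) μ) :
    |(∫ ω, psi τ (b + ε ω) ∂μ) - b| ≤ (∫ ω, |ε ω| ^ (n + 1) ∂μ) / c ^ n := by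
  rw [integral_psi_add_sub_eq hε hzero hτ b, ← integral_div]
  refine abs_integral_le_integral_abs.trans <| integral_mono_of_nonneg
    (.of_forall fun _ => abs_nonneg _) (hmom.div_const _) (.of_forall fun ω => ?_)
  exact (abs_psi_add_sub_add_le hτ hcb (ε ω)).trans
    (max_zero_sub_le_pow_div_pow (abs_nonneg _) hc n)

end Bias

theorem stmt15_general {Ω : Type*} [MeasurableSpace Ω] (μ : Measure Ω) [IsProbabilityMeasure μ]
    (ε : Ω → ℝ)
    (h1 : Integrable ε μ) (h2 : Integrable (fun ω => (ε ω) ^ 2) μ)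
    (h4 : Integrable (fun ω => (ε ω) ^ 4) μ)
    (hzero : ∫ ω, ε ω ∂μ = 0)
    (τ b : ℝ) (hτ : 0 < τ) (hb : |b| ≤ τ / 2) :
    |(∫ ω, psi τ (b + ε ω) ∂μ) - b|
      ≤ min (2 * (∫ ω, (ε ω) ^ 2 ∂μ) / τ) (8 * (∫ ω, (ε ω) ^ 4 ∂μ) / τ ^ 3) := by
  have hc : 0 < τ / 2 := by positivity
  have hcb : τ / 2 ≤ τ - |b| := by linarith
  have hbound (n : ℕ) (hn : Even (n + 1)) (hmom : Integrable (fun ω => ε ω ^ (n + 1)) μ) :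
      |(∫ ω, psi τ (b + ε ω) ∂μ) - b| ≤ (∫ ω, ε ω ^ (n + 1) ∂μ) / (τ / 2) ^ n := by
    simpa only [hn.pow_abs] using abs_integral_psi_add_sub_le h1 hzero hτ.le hc hcb n
      (by simpa only [hn.pow_abs] using hmom)
  refine le_min ((hbound 1 (by decide) h2).trans_eq ?_) ((hbound 3 (by decide) h4).trans_eq ?_)
  · field_simp
  · field_simp; ring

theorem stmt15 {Ω : Type*} [MeasurableSpace Ω] (μ : Measure Ω) [IsProbabilityMeasure μ]
    (ε : Ω → ℝ) (hmeas : Measurable ε)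
    (h1 : Integrable ε μ) (h2 : Integrable (fun ω => (ε ω) ^ 2) μ)
    (h4 : Integrable (fun ω => (ε ω) ^ 4) μ)
    (hzero : ∫ ω, ε ω ∂μ = 0)
    (τ b : ℝ) (hτ : 0 < τ) (hb : |b| ≤ τ / 2) :
    |(∫ ω, psi τ (b + ε ω) ∂μ) - b|
      ≤ min (2 * (∫ ω, (ε ω) ^ 2 ∂μ) / τ) (8 * (∫ ω, (ε ω) ^ 4 ∂μ) / τ ^ 3) :=
  stmt15_general μ ε h1 h2 h4 hzero τ b hτ hb
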